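/- Let M be an A-module of length 4 supported at m = (x,y) with dim_k M/(m·M) = 2, and suppose m·M is isomorphic to k ⊕ k = (A/m)². Writing multiplication by x and y on a pair of A-generators as k-linear maps A_x, A_y : k² → m·M = k², two such pairs (A_x, A_y) and (B_x, B_y) give rise to isomorphic A-modules if and only if there exist H, K ∈ GL₂(k) such that H A_x K = B_x and H A_y K = B_y. -/

import Mathlib

open MvPolynomial

/-- The module determined by a pair of 2×2 matrices `Ax, Ay`: on a basis
`v (inl 0), v (inl 1)` (the `A`-generators) and `v (inr 0), v (inr 1)` (a basis of
`m·M ≅ k ⊕ k`), `x` and `y` map the generators into `⟨v (inr 0), v (inr 1)⟩` via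
`Ax`, `Ay` and annihilate `v (inr i)`. -/
def IsMatrixModule (k : Type) [Field k] (Ax Ay : Matrix (Fin 2) (Fin 2) k)
    (M : Type) [AddCommGroup M] [Module (MvPolynomial (Fin 2) k) M] [Module k M]
    [IsScalarTower k (MvPolynomial (Fin 2) k) M]
    (v : Module.Basis (Fin 2 ⊕ Fin 2) k M) : Prop :=
  (∀ j : Fin 2, (X 0 : MvPolynomial (Fin 2) k) • v (Sum.inl j) = ∑ i, Ax i j • v (Sum.inr i)) ∧
  (∀ j : Fin 2, (X 1 : MvPolynomial (Fin 2) k) • v (Sum.inl j) = ∑ i, Ay i j • v (Sum.inr i)) ∧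
  (∀ j : Fin 2, (X 0 : MvPolynomial (Fin 2) k) • v (Sum.inr j) = 0) ∧
  (∀ j : Fin 2, (X 1 : MvPolynomial (Fin 2) k) • v (Sum.inr j) = 0)

/-! In the basis `v`, multiplication by `x` and `y` has the block matrices `[[0, 0], [A_x, 0]]`
and `[[0, 0], [A_y, 0]]`, so an `A`-linear isomorphism `M ≃ N` is a `k`-linear one whose matrix
`P = [[Q, S], [T, H]]` intertwines them, i.e. `S A_x = S A_y = 0` and `H A_s = B_s Q`. Since the
rows of `(A_x | A_y)` are independent, `S = 0`: the isomorphism maps `m·M` into `m·N`. Hence `Q`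
and `H` are invertible and `H A_s Q⁻¹ = B_s`. Conversely, `P = [[K⁻¹, 0], [0, H]]` defines such an
isomorphism. -/

open Matrix

namespace Matrix

variable {l m n K : Type*} [Field K] [Fintype m] [Fintype n]

lemma eq_zero_of_mul_eq_zero_of_rank_eq_card {S : Matrix l m K} {C : Matrix m n K}
    (hC : C.rank = Fintype.card m) (h : S * C = 0) : S = 0 := by
  have hrows : LinearIndependent K C.row := by
    rw [linearIndependent_iff_card_eq_finrank_span, ← hC, rank_eq_finrank_span_row]
    rfl
  ext i j
  refine Fintype.linearIndependent_iff.1 hrows (S i) (funext fun c => ?_) j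
  simpa [mul_apply, Finset.sum_apply] using congrFun (congrFun h i) c

variable {ι κ R : Type*} [Fintype ι] [Fintype κ] [CommRing R]

lemma fromBlocks_mul_eq_mul_fromBlocks_iff (Q : Matrix ι ι R) (S : Matrix ι κ R)
    (T : Matrix κ ι R) (H : Matrix κ κ R) (A B : Matrix κ ι R) :
    fromBlocks Q S T H * fromBlocks 0 0 A 0 = fromBlocks 0 0 B 0 * fromBlocks Q S T H ↔
      S * A = 0 ∧ H * A = B * Q ∧ B * S = 0 := by
  simp [fromBlocks_multiply, fromBlocks_inj, eq_comm (a := (0 : Matrix κ κ R))]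

end Matrix

section
variable {R σ : Type*} [CommSemiring R]
  {M N : Type*} [AddCommMonoid M] [Module (MvPolynomial σ R) M] [Module R M]
  [IsScalarTower R (MvPolynomial σ R) M]
  [AddCommMonoid N] [Module (MvPolynomial σ R) N] [Module R N]
  [IsScalarTower R (MvPolynomial σ R) N]

lemma MvPolynomial.map_smul_of_map_X_smul (f : M →ₗ[R] N)
    (h : ∀ s m, f ((X s : MvPolynomial σ R) • m) = (X s : MvPolynomial σ R) • f m)
    (p : MvPolynomial σ R) (m : M) : f (p • m) = p • f m := by
  induction p using MvPolynomial.induction_on generalizing m with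
  | C a => simp only [← algebraMap_eq, algebraMap_smul, map_smul]
  | add p q hp hq => rw [add_smul, map_add, hp, hq, add_smul]
  | mul_X p s hp => rw [mul_smul, hp, h, ← mul_smul]

variable {ι κ ι' : Type*} [Fintype ι] [Fintype κ] [DecidableEq ι] [DecidableEq κ]
  [Fintype ι'] [DecidableEq ι']

lemma map_smul_iff_toMatrix_mul_comm (v : Module.Basis ι R M) (w : Module.Basis ι' R N)
    (f : M →ₗ[R] N) (p : MvPolynomial σ R) :
    (∀ m, f (p • m) = p • f m) ↔
      LinearMap.toMatrix v w f * LinearMap.toMatrix v v (DistribSMul.toLinearMap R M p) =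
        LinearMap.toMatrix w w (DistribSMul.toLinearMap R N p) * LinearMap.toMatrix v w f := by
  rw [← LinearMap.toMatrix_comp, ← LinearMap.toMatrix_comp, (LinearMap.toMatrix v w).injective.eq_iff,
    LinearMap.ext_iff]
  rfl

lemma toMatrix_smul_eq_fromBlocks (v : Module.Basis (ι ⊕ κ) R M) {p : MvPolynomial σ R}
    {C : Matrix κ ι R}
    (hl : ∀ j, p • v (Sum.inl j) = ∑ i, C i j • v (Sum.inr i))
    (hr : ∀ j, p • v (Sum.inr j) = 0) :
    LinearMap.toMatrix v v (DistribSMul.toLinearMap R M p) = fromBlocks 0 0 C 0 := by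
  ext (a | a) (b | b) <;> simp [LinearMap.toMatrix_apply, hl, hr, map_sum, Finsupp.single_apply]

end

section BlockModule
variable {R σ : Type*} [CommRing R]
  {M N : Type*} [AddCommGroup M] [Module (MvPolynomial σ R) M] [Module R M]
  [IsScalarTower R (MvPolynomial σ R) M]
  [AddCommGroup N] [Module (MvPolynomial σ R) N] [Module R N]
  [IsScalarTower R (MvPolynomial σ R) N]
  {ι κ : Type*} [Fintype ι] [Fintype κ] [DecidableEq ι] [DecidableEq κ]

def IsBlockMatrixModule (A : σ → Matrix κ ι R) (v : Module.Basis (ι ⊕ κ) R M) : Prop :=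
  ∀ s, LinearMap.toMatrix v v (DistribSMul.toLinearMap R M (X s : MvPolynomial σ R)) =
    fromBlocks 0 0 (A s) 0

variable {A B : σ → Matrix κ ι R} {v : Module.Basis (ι ⊕ κ) R M} {w : Module.Basis (ι ⊕ κ) R N}

theorem IsBlockMatrixModule.exists_GL_of_linearEquiv (hv : IsBlockMatrixModule A v)
    (hw : IsBlockMatrixModule B w) (hA : ∀ S : Matrix ι κ R, (∀ s, S * A s = 0) → S = 0)
    (e : M ≃ₗ[MvPolynomial σ R] N) :
    ∃ (H : GL κ R) (K : GL ι R), ∀ s, (H : Matrix κ κ R) * A s * (K : Matrix ι ι R) = B s := by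
  set P := LinearMap.toMatrix v w (e.restrictScalars R : M →ₗ[R] N) with hP
  have hcomm : ∀ s, P.toBlocks₁₂ * A s = 0 ∧ P.toBlocks₂₂ * A s = B s * P.toBlocks₁₁ := fun s => by
    have h := (map_smul_iff_toMatrix_mul_comm v w (e.restrictScalars R : M →ₗ[R] N) (X s)).1
      (map_smul e (X s))
    rw [hv s, hw s, ← hP, ← fromBlocks_toBlocks P, fromBlocks_mul_eq_mul_fromBlocks_iff] at h
    exact ⟨h.1, h.2.1⟩
  have hS : P.toBlocks₁₂ = 0 := hA _ fun s => (hcomm s).1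
  have hdet : IsUnit (P.toBlocks₁₁.det * P.toBlocks₂₂.det) := by
    rw [← det_fromBlocks_zero₁₂ _ P.toBlocks₂₁, ← hS, fromBlocks_toBlocks]
    exact LinearEquiv.isUnit_det (e.restrictScalars R) v w
  obtain ⟨hQ, hH⟩ := IsUnit.mul_iff.1 hdet
  obtain ⟨Q, hQ⟩ := (isUnit_iff_isUnit_det _).2 hQ
  obtain ⟨H, hH⟩ := (isUnit_iff_isUnit_det _).2 hH
  refine ⟨H, Q⁻¹, fun s => ?_⟩
  rw [hH, (hcomm s).2, ← hQ, Matrix.mul_assoc, Units.mul_inv, Matrix.mul_one]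

theorem IsBlockMatrixModule.nonempty_linearEquiv_of_GL (hv : IsBlockMatrixModule A v)
    (hw : IsBlockMatrixModule B w) (H : GL κ R) (K : GL ι R)
    (h : ∀ s, (H : Matrix κ κ R) * A s * (K : Matrix ι ι R) = B s) :
    Nonempty (M ≃ₗ[MvPolynomial σ R] N) := by
  let U : GL (ι ⊕ κ) R :=
    ⟨fromBlocks ↑K⁻¹ 0 0 H, fromBlocks K 0 0 ↑H⁻¹, by simp [fromBlocks_multiply],
      by simp [fromBlocks_multiply]⟩
  have hU : ∀ s m, toLin v w U ((X s : MvPolynomial σ R) • m) =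
      (X s : MvPolynomial σ R) • toLin v w U m := fun s => by
    rw [map_smul_iff_toMatrix_mul_comm v w, hv s, hw s, LinearMap.toMatrix_toLin,
      fromBlocks_mul_eq_mul_fromBlocks_iff, ← h s]
    simp [Matrix.mul_assoc]
  let e : M ≃ₗ[R] N := LinearEquiv.ofLinearMap (f := toLin v w U) (g := toLin w v ↑U⁻¹)
    (by rw [← toLin_mul, U.mul_inv, toLin_one]) (by rw [← toLin_mul, U.inv_mul, toLin_one])
  exact ⟨{ e with map_smul' := MvPolynomial.map_smul_of_map_X_smul _ hU }⟩

theorem IsBlockMatrixModule.nonempty_linearEquiv_iff (hv : IsBlockMatrixModule A v)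
    (hw : IsBlockMatrixModule B w) (hA : ∀ S : Matrix ι κ R, (∀ s, S * A s = 0) → S = 0) :
    Nonempty (M ≃ₗ[MvPolynomial σ R] N) ↔
      ∃ (H : GL κ R) (K : GL ι R), ∀ s, (H : Matrix κ κ R) * A s * (K : Matrix ι ι R) = B s :=
  ⟨fun ⟨e⟩ => hv.exists_GL_of_linearEquiv hw hA e,
    fun ⟨H, K, h⟩ => hv.nonempty_linearEquiv_of_GL hw H K h⟩

end BlockModule

lemma IsMatrixModule.isBlockMatrixModule {k : Type} [Field k] {Ax Ay : Matrix (Fin 2) (Fin 2) k}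
    {M : Type} [AddCommGroup M] [Module (MvPolynomial (Fin 2) k) M] [Module k M]
    [IsScalarTower k (MvPolynomial (Fin 2) k) M] {v : Module.Basis (Fin 2 ⊕ Fin 2) k M}
    (h : IsMatrixModule k Ax Ay M v) : IsBlockMatrixModule ![Ax, Ay] v :=
  Fin.forall_fin_two.2 ⟨toMatrix_smul_eq_fromBlocks v h.1 h.2.2.1,
    toMatrix_smul_eq_fromBlocks v h.2.1 h.2.2.2⟩

theorem matrixModule_iso_iff_GL2_equiv_general (k : Type) [Field k]
    (Ax Ay Bx By : Matrix (Fin 2) (Fin 2) k)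
    (hA : (Matrix.fromCols Ax Ay).rank = 2)
    (M : Type) [AddCommGroup M] [Module (MvPolynomial (Fin 2) k) M] [Module k M]
    [IsScalarTower k (MvPolynomial (Fin 2) k) M]
    (N : Type) [AddCommGroup N] [Module (MvPolynomial (Fin 2) k) N] [Module k N]
    [IsScalarTower k (MvPolynomial (Fin 2) k) N]
    (v : Module.Basis (Fin 2 ⊕ Fin 2) k M) (w : Module.Basis (Fin 2 ⊕ Fin 2) k N)
    (hM : IsMatrixModule k Ax Ay M v) (hN : IsMatrixModule k Bx By N w) :
    Nonempty (M ≃ₗ[MvPolynomial (Fin 2) k] N) ↔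
      ∃ H K : GL (Fin 2) k,
        (H : Matrix (Fin 2) (Fin 2) k) * Ax * (K : Matrix (Fin 2) (Fin 2) k) = Bx ∧
        (H : Matrix (Fin 2) (Fin 2) k) * Ay * (K : Matrix (Fin 2) (Fin 2) k) = By := by
  have hA' : ∀ S : Matrix (Fin 2) (Fin 2) k, (∀ s, S * ![Ax, Ay] s = 0) → S = 0 := fun S hS =>
    eq_zero_of_mul_eq_zero_of_rank_eq_card (by simpa using hA)
      (by rw [mul_fromCols, show S * Ax = 0 from hS 0, show S * Ay = 0 from hS 1, fromCols_zero])
  rw [hM.isBlockMatrixModule.nonempty_linearEquiv_iff hN.isBlockMatrixModule hA']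
  simp [Fin.forall_fin_two]

/-- For length-4 modules `M` with `dim_k M/(m·M) = 2` and `m·M ≅ k ⊕ k`,
described by pairs of 2×2 matrices `(A_x, A_y)` with `rk (A_x | A_y) = 2`, two pairs
`(A_x, A_y)` and `(B_x, B_y)` give isomorphic `A`-modules if and only if there are
`H, K ∈ GL₂(k)` with `H A_x K = B_x` and `H A_y K = B_y`. -/
theorem matrixModule_iso_iff_GL2_equiv (k : Type) [Field k] [IsAlgClosed k] [CharZero k]
    (Ax Ay Bx By : Matrix (Fin 2) (Fin 2) k)
    (hA : (Matrix.fromCols Ax Ay).rank = 2)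
    (hB : (Matrix.fromCols Bx By).rank = 2)
    (M : Type) [AddCommGroup M] [Module (MvPolynomial (Fin 2) k) M] [Module k M]
    [IsScalarTower k (MvPolynomial (Fin 2) k) M]
    (N : Type) [AddCommGroup N] [Module (MvPolynomial (Fin 2) k) N] [Module k N]
    [IsScalarTower k (MvPolynomial (Fin 2) k) N]
    (v : Module.Basis (Fin 2 ⊕ Fin 2) k M) (w : Module.Basis (Fin 2 ⊕ Fin 2) k N)
    (hM : IsMatrixModule k Ax Ay M v) (hN : IsMatrixModule k Bx By N w) :
    Nonempty (M ≃ₗ[MvPolynomial (Fin 2) k] N) ↔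
      ∃ H K : GL (Fin 2) k,
        (H : Matrix (Fin 2) (Fin 2) k) * Ax * (K : Matrix (Fin 2) (Fin 2) k) = Bx ∧
        (H : Matrix (Fin 2) (Fin 2) k) * Ay * (K : Matrix (Fin 2) (Fin 2) k) = By :=
  matrixModule_iso_iff_GL2_equiv_general k Ax Ay Bx By hA M N v w hM hN
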